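/- Let s ∈ (0,1) and let M be a Young function. There exists a constant C = C(n,s) > 0 (one may take C = 2^{s+1}·max{1, 2^{n+1}/ω_n}, where ω_n is the Lebesgue measure of the unit ball of ℝⁿ) such that for every measurable u : ℝⁿ → ℝ with ‖D^s u‖_{M,ν_n} < ∞ and every h ∈ ℝⁿ with 0 < |h| < 1/2, ‖u(·+h) − u‖_{M,dx} ≤ C |h|^s ‖D^s u‖_{M,ν_n}, where ‖·‖_{M,dx} is the Luxemburg norm on (ℝⁿ, Lebesgue measure) and ‖·‖_{M,ν_n} is the Luxemburg norm on (ℝ^{2n}, ν_n). -/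

import Mathlib

open MeasureTheory Filter Topology Set

noncomputable section

/-- ℝⁿ with the Euclidean norm. -/
abbrev Rn (n : ℕ) : Type := EuclideanSpace ℝ (Fin n)

/-- The measure dν_n = dx dy / |x-y|^n on ℝ^{2n}. -/
def nuMeasure (n : ℕ) : Measure (Rn n × Rn n) :=
  volume.withDensity fun p => ENNReal.ofReal (‖p.1 - p.2‖ ^ (-(n : ℝ)))

/-- Hölder quotient `D^s u (x,y) = (u x - u y)/|x-y|^s`. -/
def Ds (n : ℕ) (s : ℝ) (u : Rn n → ℝ) (p : Rn n × Rn n) : ℝ :=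
  (u p.1 - u p.2) / ‖p.1 - p.2‖ ^ s

/-- A Young function, encoded by its density `m` which is nondecreasing, right continuous,
vanishing exactly at `0`, tending to `∞` and extended to `ℝ` as an odd function. -/
structure YoungFunction where
  m : ℝ → ℝ
  nonneg : ∀ t, 0 ≤ t → 0 ≤ m t
  mono : MonotoneOn m (Set.Ici 0)
  rightCont : ∀ t, 0 ≤ t → ContinuousWithinAt m (Set.Ici t) t
  zero_iff : ∀ t, 0 ≤ t → (m t = 0 ↔ t = 0)
  tendsto_top : Filter.Tendsto m Filter.atTop Filter.atTop
  odd : ∀ t, m (-t) = -m t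

/-- `M(t) = ∫_0^{|t|} m(τ) dτ`. -/
def YoungFunction.M (Y : YoungFunction) (t : ℝ) : ℝ :=
  ∫ τ in (0:ℝ)..|t|, Y.m τ

/-- The complementary Young function `M̄(t) = sup {τ|t| - M(τ) : τ ≥ 0}`. -/
def YoungFunction.Mbar (Y : YoungFunction) (t : ℝ) : ℝ :=
  sSup {x : ℝ | ∃ τ, 0 ≤ τ ∧ x = τ * |t| - Y.M τ}

/-- The segment property for a bounded open set. -/
def SegmentProperty {n : ℕ} (Ω : Set (Rn n)) : Prop :=
  ∃ (ι : Type) (c : ι → Rn n) (t : ℝ) (ν : ι → Rn n) (tstar : ℝ),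
    0 < t ∧ 0 < tstar ∧ tstar < 1 ∧
    (∀ j, c j ∈ frontier Ω) ∧
    (∀ j, ‖ν j‖ = 1) ∧
    frontier Ω ⊆ ⋃ j, Metric.ball (c j) t ∧
    LocallyFinite (fun j => Metric.ball (c j) t) ∧
    ∀ j, ∀ x ∈ closure Ω ∩ Metric.ball (c j) t, ∀ τ : ℝ, 0 < τ → τ < tstar →
      x + τ • ν j ∈ Ω

/-- Luxemburg norm. -/
def luxNorm {α : Type*} [MeasurableSpace α] (μ : Measure α) (M : ℝ → ℝ) (f : α → ℝ) : ℝ :=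
  sInf {k : ℝ | 0 < k ∧ ∫⁻ a, ENNReal.ofReal (M (f a / k)) ∂μ ≤ 1}

/-!
Put `r = |h|` and `K = 2^{s+1} A r^s k` with `A ≥ 1`, `2^n ≤ A ω_n`. For `y ∈ B(x, r)` split
`u(x+h) - u(x) = (u(x+h) - u(y)) + (u(y) - u(x))`: both pairs are at distance at most `2r`, so
convexity of `M` and `M(t/A) ≤ M(t)/A` give
`M((u(x+h) - u(x))/K) ≤ (2A)⁻¹ (M(D^s u(x+h,y)/k) + M(D^s u(x,y)/k))`.
Averaging over `y ∈ B(x, r)`, where `|z - y|^{-n} ≥ (2r)^{-n}`, and integrating in `x` (Tonelli,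
translation invariance) bounds the modular of `(u(·+h) - u)/K` by `2^n/(A ω_n) ≤ 1` times that of
`D^s u/k`. Hence `K` is admissible for `u(·+h) - u` whenever `k` is admissible for `D^s u`.
-/

open ENNReal Metric Module

namespace ConvexOn

variable {Φ : ℝ → ℝ}

lemma le_of_abs_le_abs (hΦ : ConvexOn ℝ univ Φ) (heven : ∀ t, Φ (-t) = Φ t) {a b : ℝ}
    (hab : |a| ≤ |b|) : Φ a ≤ Φ b := by
  have hseg : a ∈ segment ℝ (-|b|) |b| := by
    rw [segment_eq_Icc (by simp)]
    exact abs_le.1 hab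
  have hend : Φ |b| = Φ b := by
    rcases abs_choice b with hb | hb <;> simp [hb, heven]
  simpa [heven, hend] using hΦ.le_on_segment (mem_univ _) (mem_univ _) hseg

lemma map_div_le_div (hΦ : ConvexOn ℝ univ Φ) (h0 : Φ 0 = 0) {A : ℝ} (hA : 1 ≤ A) (t : ℝ) :
    Φ (t / A) ≤ Φ t / A := by
  have hA0 : 0 < A := one_pos.trans_le hA
  have := hΦ.2 (mem_univ t) (mem_univ 0) (inv_nonneg.2 hA0.le)
    (sub_nonneg.2 (inv_le_one_of_one_le₀ hA)) (add_sub_cancel _ _)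
  simpa [h0, div_eq_inv_mul] using this

lemma map_midpoint_le (hΦ : ConvexOn ℝ univ Φ) (a b : ℝ) :
    Φ ((a + b) / 2) ≤ (Φ a + Φ b) / 2 := by
  have := hΦ.2 (mem_univ a) (mem_univ b) (by norm_num : (0 : ℝ) ≤ 1 / 2)
    (by norm_num : (0 : ℝ) ≤ 1 / 2) (by norm_num)
  rw [show (a + b) / 2 = (1 / 2 : ℝ) • a + (1 / 2 : ℝ) • b by simp only [smul_eq_mul]; ring]
  simp only [smul_eq_mul] at this ⊢
  linarith

-- `hb` covers the diagonal, where Lean's `b / 0 = 0` is the value of the Hölder quotient.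
lemma map_two_mul_div_le (hΦ : ConvexOn ℝ univ Φ) (heven : ∀ t, Φ (-t) = Φ t) (h0 : Φ 0 = 0)
    {s A k r b d : ℝ} (hs : 0 ≤ s) (hA : 1 ≤ A) (hk : 0 < k) (hd : 0 ≤ d) (hdr : d ≤ 2 * r)
    (hb : d = 0 → b = 0) :
    Φ (2 * b / (2 ^ (s + 1) * A * r ^ s * k)) ≤ Φ (b / d ^ s / k) / A := by
  rcases hd.eq_or_lt with rfl | hd
  · simp [hb rfl, h0]
  have hr : 0 < r := by linarith
  have hA0 : 0 < A := one_pos.trans_le hA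
  have hK : 2 * (d ^ s * k * A) ≤ 2 ^ (s + 1) * A * r ^ s * k := by
    have : d ^ s ≤ 2 ^ s * r ^ s := by
      rw [← Real.mul_rpow zero_le_two hr.le]
      exact Real.rpow_le_rpow hd.le hdr hs
    rw [Real.rpow_add_one two_ne_zero]
    nlinarith [mul_pos hk hA0]
  have hc : 0 < d ^ s * k * A := by positivity
  have hfactor : 2 / (2 ^ (s + 1) * A * r ^ s * k) ≤ (d ^ s * k * A)⁻¹ := by
    rw [div_le_iff₀ ((mul_pos two_pos hc).trans_le hK), inv_mul_eq_div, le_div_iff₀ hc]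
    linarith
  refine (hΦ.le_of_abs_le_abs heven ?_).trans (hΦ.map_div_le_div h0 hA _)
  rw [show 2 * b / (2 ^ (s + 1) * A * r ^ s * k) = b * (2 / (2 ^ (s + 1) * A * r ^ s * k)) by ring,
    show b / d ^ s / k / A = b * (d ^ s * k * A)⁻¹ by ring, abs_mul, abs_mul,
    abs_of_nonneg (by positivity : (0 : ℝ) ≤ 2 / (2 ^ (s + 1) * A * r ^ s * k)),
    abs_of_pos (inv_pos.2 hc)]
  exact mul_le_mul_of_nonneg_left hfactor (abs_nonneg b)

lemma map_sub_div_le (hΦ : ConvexOn ℝ univ Φ) (heven : ∀ t, Φ (-t) = Φ t) (h0 : Φ 0 = 0)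
    {s A k r a b c d₁ d₂ : ℝ} (hs : 0 ≤ s) (hA : 1 ≤ A) (hk : 0 < k)
    (hd₁ : 0 ≤ d₁) (hd₁r : d₁ ≤ 2 * r) (hac : d₁ = 0 → a = c)
    (hd₂ : 0 ≤ d₂) (hd₂r : d₂ ≤ 2 * r) (hbc : d₂ = 0 → b = c) :
    Φ ((a - b) / (2 ^ (s + 1) * A * r ^ s * k)) ≤
      (2 * A)⁻¹ * (Φ ((a - c) / d₁ ^ s / k) + Φ ((b - c) / d₂ ^ s / k)) := by
  have h₁ := hΦ.map_two_mul_div_le heven h0 hs hA hk hd₁ hd₁r fun h => sub_eq_zero.2 (hac h)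
  have h₂ := hΦ.map_two_mul_div_le heven h0 hs hA hk hd₂ hd₂r fun h => sub_eq_zero.2 (hbc h)
  set K := 2 ^ (s + 1) * A * r ^ s * k
  have hsplit : (a - b) / K = (2 * (a - c) / K + -(2 * (b - c) / K)) / 2 := by ring
  calc Φ ((a - b) / K) ≤ (Φ (2 * (a - c) / K) + Φ (-(2 * (b - c) / K))) / 2 :=
        hsplit ▸ hΦ.map_midpoint_le _ _
    _ ≤ (Φ ((a - c) / d₁ ^ s / k) / A + Φ ((b - c) / d₂ ^ s / k) / A) / 2 := by
        rw [heven]; gcongr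
    _ = _ := by ring

end ConvexOn

namespace YoungFunction

variable (Y : YoungFunction)

lemma intervalIntegrable_m {a b : ℝ} (ha : 0 ≤ a) (hb : 0 ≤ b) :
    IntervalIntegrable Y.m volume a b :=
  (Y.mono.mono fun _ hx => (le_min ha hb).trans hx.1).intervalIntegrable

lemma mul_m_le_integral {a b : ℝ} (ha : 0 ≤ a) (hab : a ≤ b) :
    (b - a) * Y.m a ≤ ∫ τ in a..b, Y.m τ := by
  simpa [mul_comm] using intervalIntegral.integral_mono_on hab intervalIntegrable_const
    (Y.intervalIntegrable_m ha (ha.trans hab)) fun x hx => Y.mono ha (ha.trans hx.1) hx.1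

lemma integral_le_mul_m {a b : ℝ} (ha : 0 ≤ a) (hab : a ≤ b) :
    ∫ τ in a..b, Y.m τ ≤ (b - a) * Y.m b := by
  simpa [mul_comm] using intervalIntegral.integral_mono_on hab
    (Y.intervalIntegrable_m ha (ha.trans hab)) intervalIntegrable_const
    fun x hx => Y.mono (ha.trans hx.1) (ha.trans hab) hx.2

lemma integral_sub_integral {a b : ℝ} (ha : 0 ≤ a) (hb : 0 ≤ b) :
    (∫ τ in 0..b, Y.m τ) - ∫ τ in 0..a, Y.m τ = ∫ τ in a..b, Y.m τ :=
  intervalIntegral.integral_interval_sub_left (Y.intervalIntegrable_m le_rfl hb)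
    (Y.intervalIntegrable_m le_rfl ha)

lemma monotoneOn_integral : MonotoneOn (fun t => ∫ τ in 0..t, Y.m τ) (Ici 0) := by
  intro a ha b _ hab
  have := Y.mul_m_le_integral ha hab
  have := mul_nonneg (sub_nonneg.2 hab) (Y.nonneg a ha)
  linarith [Y.integral_sub_integral ha (ha.trans hab)]

lemma convexOn_integral : ConvexOn ℝ (Ici 0) (fun t => ∫ τ in 0..t, Y.m τ) := by
  refine convexOn_of_slope_mono_adjacent (convex_Ici 0) fun {x y z} hx _ hxy hyz => ?_
  have hy : (0 : ℝ) ≤ y := le_trans hx hxy.le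
  rw [Y.integral_sub_integral hx hy, Y.integral_sub_integral hy (hy.trans hyz.le),
    div_le_div_iff₀ (sub_pos.2 hxy) (sub_pos.2 hyz)]
  have h₁ := mul_le_mul_of_nonneg_right (Y.integral_le_mul_m hx hxy.le) (sub_pos.2 hyz).le
  have h₂ := mul_le_mul_of_nonneg_right (Y.mul_m_le_integral hy hyz.le) (sub_pos.2 hxy).le
  nlinarith

lemma convexOn_M : ConvexOn ℝ univ Y.M := by
  refine ⟨convex_univ, fun x _ y _ a b ha hb hab => ?_⟩
  have hcomb : |a • x + b • y| ≤ a • |x| + b • |y| := by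
    simpa [abs_of_nonneg ha, abs_of_nonneg hb] using abs_add_le (a • x) (b • y)
  calc Y.M (a • x + b • y) ≤ ∫ τ in 0..(a • |x| + b • |y|), Y.m τ :=
        Y.monotoneOn_integral (mem_Ici.2 (abs_nonneg _)) (mem_Ici.2 (by positivity)) hcomb
    _ ≤ a • Y.M x + b • Y.M y :=
        Y.convexOn_integral.2 (abs_nonneg x) (abs_nonneg y) ha hb hab

lemma M_neg (t : ℝ) : Y.M (-t) = Y.M t := by rw [M, M, abs_neg]

lemma M_zero : Y.M 0 = 0 := by simp [M]

end YoungFunction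

section SingularKernel

variable {E : Type*} [NormedAddCommGroup E]

-- `nuMeasure n = (volume.prod volume).withDensity (singularKernel n)`.
def singularKernel (d : ℕ) (p : E × E) : ℝ≥0∞ := ENNReal.ofReal (‖p.1 - p.2‖ ^ (-(d : ℝ)))

lemma one_le_ofReal_pow_mul_singularKernel (d : ℕ) {z y : E} {R : ℝ} (hzy : z ≠ y)
    (hR : ‖z - y‖ ≤ R) : 1 ≤ ENNReal.ofReal (R ^ d) * singularKernel d (z, y) := by
  have hpos : 0 < ‖z - y‖ := norm_sub_pos_iff.2 hzy
  rw [singularKernel, ← ENNReal.ofReal_mul (pow_nonneg (hpos.le.trans hR) d), ← ENNReal.ofReal_one,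
    Real.rpow_neg hpos.le, Real.rpow_natCast, ← div_eq_mul_inv]
  exact ENNReal.ofReal_le_ofReal ((one_le_div (by positivity)).2 (by gcongr))

variable [MeasurableSpace E] {μ : Measure E}

-- The kernel vanishes at `y = z` (`0 ^ (-d) = 0` for `d ≠ 0`), hence `hz`.
lemma setLIntegral_le_ofReal_pow_mul_lintegral_singularKernel (d : ℕ) {g : E → ℝ≥0∞}
    {S : Set E} {z : E} {R : ℝ} (hS : MeasurableSet S) (hSR : S ⊆ closedBall z R)
    (hz : g z = 0) :
    ∫⁻ y in S, g y ∂μ ≤ ENNReal.ofReal (R ^ d) * ∫⁻ y, singularKernel d (z, y) * g y ∂μ := by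
  calc ∫⁻ y in S, g y ∂μ
      ≤ ∫⁻ y in S, ENNReal.ofReal (R ^ d) * (singularKernel d (z, y) * g y) ∂μ := by
        refine setLIntegral_mono' hS fun y hy => ?_
        rcases eq_or_ne z y with rfl | hzy
        · simp [hz]
        have hR : ‖z - y‖ ≤ R := by simpa [dist_eq_norm, norm_sub_rev] using hSR hy
        rw [← mul_assoc]
        exact le_mul_of_one_le_left' (one_le_ofReal_pow_mul_singularKernel d hzy hR)
    _ ≤ ENNReal.ofReal (R ^ d) * ∫⁻ y, singularKernel d (z, y) * g y ∂μ := by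
        rw [← lintegral_const_mul' _ _ ofReal_ne_top]
        exact setLIntegral_le_lintegral _ _

variable [OpensMeasurableSpace E]

lemma measure_ball_mul_le_of_forall_mem_ball (d : ℕ) {F : E × E → ℝ≥0∞} (hF : Measurable F)
    (hF_diag : ∀ z, F (z, z) = 0) {x h : E} {t c : ℝ≥0∞}
    (ht : ∀ y ∈ ball x ‖h‖, t ≤ c * (F (x + h, y) + F (x, y))) :
    μ (ball x ‖h‖) * t ≤ c * ENNReal.ofReal ((2 * ‖h‖) ^ d) *
      ((∫⁻ y, singularKernel d (x + h, y) * F (x + h, y) ∂μ) +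
        ∫⁻ y, singularKernel d (x, y) * F (x, y) ∂μ) := by
  have hball₁ : ball x ‖h‖ ⊆ closedBall (x + h) (2 * ‖h‖) := ball_subset_closedBall.trans
    (closedBall_subset_closedBall' (by rw [dist_self_add_right]; linarith))
  have hball₂ : ball x ‖h‖ ⊆ closedBall x (2 * ‖h‖) :=
    ball_subset_closedBall.trans (closedBall_subset_closedBall (by linarith [norm_nonneg h]))
  have hF₁ : Measurable fun y => F (x + h, y) := hF.comp measurable_prodMk_left
  have hF₂ : Measurable fun y => F (x, y) := hF.comp measurable_prodMk_left
  calc μ (ball x ‖h‖) * t = ∫⁻ _ in ball x ‖h‖, t ∂μ := by rw [setLIntegral_const, mul_comm]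
    _ ≤ ∫⁻ y in ball x ‖h‖, c * (F (x + h, y) + F (x, y)) ∂μ :=
        setLIntegral_mono' measurableSet_ball ht
    _ = c * ((∫⁻ y in ball x ‖h‖, F (x + h, y) ∂μ) + ∫⁻ y in ball x ‖h‖, F (x, y) ∂μ) := by
        rw [lintegral_const_mul c (f := fun y => F (x + h, y) + F (x, y)) (hF₁.add hF₂),
          lintegral_add_left hF₁]
    _ ≤ _ := by
        rw [mul_assoc, mul_add (ENNReal.ofReal _)]
        gcongr c * (?_ + ?_)
        · exact setLIntegral_le_ofReal_pow_mul_lintegral_singularKernel d measurableSet_ball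
            hball₁ (hF_diag _)
        · exact setLIntegral_le_ofReal_pow_mul_lintegral_singularKernel d measurableSet_ball
            hball₂ (hF_diag _)

end SingularKernel

lemma measure_ball_mul_lintegral_le {E : Type*} [NormedAddCommGroup E] [MeasurableSpace E]
    [BorelSpace E] [SecondCountableTopology E] (μ : Measure E) [μ.IsAddHaarMeasure] [SFinite μ]
    (d : ℕ) {T : E → ℝ≥0∞} {F : E × E → ℝ≥0∞} (hF : Measurable F) (hF_diag : ∀ z, F (z, z) = 0)
    {h : E} {c : ℝ≥0∞} (hT : ∀ x, ∀ y ∈ ball x ‖h‖, T x ≤ c * (F (x + h, y) + F (x, y))) :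
    μ (ball 0 ‖h‖) * ∫⁻ x, T x ∂μ ≤
      2 * c * ENNReal.ofReal ((2 * ‖h‖) ^ d) *
        ∫⁻ p, F p ∂(μ.prod μ).withDensity (singularKernel d) := by
  set G : E → ℝ≥0∞ := fun x => ∫⁻ y, singularKernel d (x, y) * F (x, y) ∂μ
  have hK : Measurable (singularKernel d : E × E → ℝ≥0∞) := by unfold singularKernel; fun_prop
  have hG : Measurable G := (hK.mul hF).lintegral_prod_right'
  have hFG : ∫⁻ p, F p ∂(μ.prod μ).withDensity (singularKernel d) = ∫⁻ x, G x ∂μ := by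
    rw [lintegral_withDensity_eq_lintegral_mul _ hK hF, lintegral_prod _ (hK.mul hF).aemeasurable]
    rfl
  calc μ (ball 0 ‖h‖) * ∫⁻ x, T x ∂μ ≤ ∫⁻ x, μ (ball x ‖h‖) * T x ∂μ := by
        simpa only [Measure.addHaar_ball_center μ] using lintegral_const_mul_le _ _
    _ ≤ ∫⁻ x, c * ENNReal.ofReal ((2 * ‖h‖) ^ d) * (G (x + h) + G x) ∂μ :=
        lintegral_mono fun x => measure_ball_mul_le_of_forall_mem_ball d hF hF_diag (hT x)
    _ = 2 * c * ENNReal.ofReal ((2 * ‖h‖) ^ d) * ∫⁻ x, G x ∂μ := by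
        rw [lintegral_const_mul _ (f := fun x => G (x + h) + G x)
            ((hG.comp (measurable_add_const h)).add hG),
          lintegral_add_left (f := fun x => G (x + h)) (hG.comp (measurable_add_const h)),
          lintegral_add_right_eq_self G h]
        ring
    _ = _ := by rw [hFG]

section TranslationEstimate

variable {E : Type*} [NormedAddCommGroup E] [NormedSpace ℝ E] [FiniteDimensional ℝ E]
  [MeasurableSpace E] [BorelSpace E] (μ : Measure E) [μ.IsAddHaarMeasure]

lemma two_mul_ofReal_le_measure_ball {A : ℝ} (hA : 0 < A)
    (hAμ : 2 ^ finrank ℝ E ≤ A * (μ (ball 0 1)).toReal) {r : ℝ} (hr : 0 < r) :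
    2 * ENNReal.ofReal (2 * A)⁻¹ * ENNReal.ofReal ((2 * r) ^ finrank ℝ E) ≤ μ (ball 0 r) := by
  rw [Measure.addHaar_ball_of_pos μ 0 hr, ← ofReal_toReal (measure_ball_lt_top (μ := μ)).ne,
    ← ENNReal.ofReal_ofNat 2, ← ENNReal.ofReal_mul zero_le_two,
    ← ENNReal.ofReal_mul (by positivity), ← ENNReal.ofReal_mul (by positivity)]
  refine ENNReal.ofReal_le_ofReal ?_
  calc 2 * (2 * A)⁻¹ * (2 * r) ^ finrank ℝ E = r ^ finrank ℝ E * (2 ^ finrank ℝ E / A) := by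
        rw [mul_pow]
        field_simp
    _ ≤ r ^ finrank ℝ E * (μ (ball 0 1)).toReal := by
        gcongr
        rwa [div_le_iff₀ hA, mul_comm]

theorem lintegral_map_translate_sub_le {Φ : ℝ → ℝ} (hΦ : ConvexOn ℝ univ Φ)
    (heven : ∀ t, Φ (-t) = Φ t) (h0 : Φ 0 = 0) {s A k : ℝ} (hs : 0 ≤ s) (hA : 1 ≤ A)
    (hAμ : 2 ^ finrank ℝ E ≤ A * (μ (ball 0 1)).toReal) (hk : 0 < k) {u : E → ℝ}
    (hu : Measurable u) {h : E} (hh : h ≠ 0) :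
    ∫⁻ x, ENNReal.ofReal (Φ ((u (x + h) - u x) / (2 ^ (s + 1) * A * ‖h‖ ^ s * k))) ∂μ ≤
      ∫⁻ p, ENNReal.ofReal (Φ ((u p.1 - u p.2) / ‖p.1 - p.2‖ ^ s / k))
        ∂(μ.prod μ).withDensity (singularKernel (finrank ℝ E)) := by
  have hΦ_nonneg : ∀ t, 0 ≤ Φ t := fun t => h0 ▸ hΦ.le_of_abs_le_abs heven (by simp)
  have hΦm : Measurable Φ := (continuousOn_univ.1 (hΦ.continuousOn isOpen_univ)).measurable
  have hmid : ∀ x, ∀ y ∈ ball x ‖h‖,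
      ENNReal.ofReal (Φ ((u (x + h) - u x) / (2 ^ (s + 1) * A * ‖h‖ ^ s * k))) ≤
        ENNReal.ofReal (2 * A)⁻¹ *
          (ENNReal.ofReal (Φ ((u (x + h) - u y) / ‖x + h - y‖ ^ s / k)) +
            ENNReal.ofReal (Φ ((u x - u y) / ‖x - y‖ ^ s / k))) := fun x y hy => by
    have hxy : ‖x - y‖ ≤ ‖h‖ := by simpa [dist_eq_norm] using (mem_ball'.1 hy).le
    have hxhy : ‖x + h - y‖ ≤ 2 * ‖h‖ := by
      rw [add_sub_right_comm]
      linarith [norm_add_le (x - y) h]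
    rw [← ENNReal.ofReal_add (hΦ_nonneg _) (hΦ_nonneg _), ← ENNReal.ofReal_mul (by positivity)]
    refine ENNReal.ofReal_le_ofReal (hΦ.map_sub_div_le heven h0 hs hA hk (norm_nonneg _) hxhy
      (fun hd => ?_) (norm_nonneg _) (by linarith [norm_nonneg h]) (fun hd => ?_)) <;>
    rw [norm_sub_eq_zero_iff.1 hd]
  have hβ : μ (ball 0 ‖h‖) ≠ 0 := (measure_ball_pos μ 0 (norm_pos_iff.2 hh)).ne'
  rw [← ENNReal.mul_le_mul_iff_right hβ measure_ball_lt_top.ne]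
  refine (measure_ball_mul_lintegral_le μ (finrank ℝ E)
    (F := fun p => ENNReal.ofReal (Φ ((u p.1 - u p.2) / ‖p.1 - p.2‖ ^ s / k)))
    (by fun_prop) (by simp [h0]) hmid).trans ?_
  gcongr
  exact two_mul_ofReal_le_measure_ball μ (by linarith) hAμ (norm_pos_iff.2 hh)

end TranslationEstimate

lemma luxNorm_le_mul_of_forall_lintegral_le {α β : Type*} [MeasurableSpace α] [MeasurableSpace β]
    {μ : Measure α} {ν : Measure β} {M : ℝ → ℝ} {f : α → ℝ} {g : β → ℝ} {C : ℝ} (hC : 0 < C)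
    (hg : ∃ k, 0 < k ∧ ∫⁻ b, ENNReal.ofReal (M (g b / k)) ∂ν ≤ 1)
    (hfg : ∀ k, 0 < k →
      ∫⁻ a, ENNReal.ofReal (M (f a / (C * k))) ∂μ ≤ ∫⁻ b, ENNReal.ofReal (M (g b / k)) ∂ν) :
    luxNorm μ M f ≤ C * luxNorm ν M g := by
  rw [← div_le_iff₀' hC]
  refine le_csInf hg fun k ⟨hk, hgk⟩ => (div_le_iff₀' hC).2 ?_
  exact csInf_le ⟨0, fun _ hk => hk.1.le⟩ ⟨by positivity, (hfg k hk).trans hgk⟩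

theorem norm_translation_estimate_general (n : ℕ) (s : ℝ)
    (hs : s ∈ Set.Ioo (0 : ℝ) 1) (Y : YoungFunction) :
    ∃ C : ℝ, 0 < C ∧
      C = (2 : ℝ) ^ (s + 1) *
        max 1 ((2 : ℝ) ^ (n + 1) / (volume (Metric.ball (0 : Rn n) 1)).toReal) ∧
      ∀ u : Rn n → ℝ, Measurable u →
        (∃ k : ℝ, 0 < k ∧
          ∫⁻ p, ENNReal.ofReal (Y.M (Ds n s u p / k)) ∂nuMeasure n ≤ 1) →
        ∀ h : Rn n, 0 < ‖h‖ → ‖h‖ < 1 / 2 →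
          luxNorm volume Y.M (fun x => u (x + h) - u x) ≤
            C * ‖h‖ ^ s * luxNorm (nuMeasure n) Y.M (Ds n s u) := by
  set A := max 1 ((2 : ℝ) ^ (n + 1) / (volume (ball (0 : Rn n) 1)).toReal)
  have hω : 0 < (volume (ball (0 : Rn n) 1)).toReal :=
    ENNReal.toReal_pos (measure_ball_pos volume 0 one_pos).ne' measure_ball_lt_top.ne
  have hAω : (2 : ℝ) ^ finrank ℝ (Rn n) ≤ A * (volume (ball (0 : Rn n) 1)).toReal := by
    rw [finrank_euclideanSpace_fin, ← div_le_iff₀ hω]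
    exact (div_le_div_of_nonneg_right (pow_le_pow_right₀ one_le_two n.le_succ) hω.le).trans
      (le_max_right _ _)
  refine ⟨2 ^ (s + 1) * A, by positivity, rfl, fun u hu hDs h hh _ => ?_⟩
  refine luxNorm_le_mul_of_forall_lintegral_le (by positivity) hDs fun k hk => ?_
  have := lintegral_map_translate_sub_le volume Y.convexOn_M Y.M_neg Y.M_zero hs.1.le
    (le_max_left _ _) hAω hk hu (norm_pos_iff.1 hh)
  rwa [finrank_euclideanSpace_fin] at this

/-- the norm form of the translation estimate (Corollary B.2):
there is `C = C(n,s) > 0`, namely `C = 2^{s+1}·max{1, 2^{n+1}/ω_n}`, such that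
`‖u(·+h) − u‖_{M,dx} ≤ C|h|^s ‖D^s u‖_{M,ν_n}` for `0 < |h| < 1/2`. -/
theorem norm_translation_estimate (n : ℕ) (hn : 0 < n) (s : ℝ)
    (hs : s ∈ Set.Ioo (0 : ℝ) 1) (Y : YoungFunction) :
    ∃ C : ℝ, 0 < C ∧
      C = (2 : ℝ) ^ (s + 1) *
        max 1 ((2 : ℝ) ^ (n + 1) / (volume (Metric.ball (0 : Rn n) 1)).toReal) ∧
      ∀ u : Rn n → ℝ, Measurable u →
        (∃ k : ℝ, 0 < k ∧
          ∫⁻ p, ENNReal.ofReal (Y.M (Ds n s u p / k)) ∂nuMeasure n ≤ 1) →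
        ∀ h : Rn n, 0 < ‖h‖ → ‖h‖ < 1 / 2 →
          luxNorm volume Y.M (fun x => u (x + h) - u x) ≤
            C * ‖h‖ ^ s * luxNorm (nuMeasure n) Y.M (Ds n s u) :=
  norm_translation_estimate_general n s hs Y
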